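/- The set-valued map G : ℝ³ ⇉ ℝ² is upper semicontinuous: for every x ∈ ℝ³ and every open set V ⊆ ℝ² with G(x) ⊆ V, there exists δ > 0 such that G(y) ⊆ V for every y ∈ ℝ³ with |y − x| < δ. -/

import Mathlib

/-- `σ x = √(x₁² + x₂²)`. -/
noncomputable def sigmaBI (x : EuclideanSpace ℝ (Fin 3)) : ℝ :=
  Real.sqrt (x 0 ^ 2 + x 1 ^ 2)

/-- First component of the speed-gradient vector `g(x)` for the Brockett integrator:
`g₁(x) = 2x₁ − 4x₂x₃ − 2|x₃|x₁/σ(x) + 2 sgn(x₃) x₂ σ(x)`. -/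
noncomputable def g1BI (x : EuclideanSpace ℝ (Fin 3)) : ℝ :=
  2 * x 0 - 4 * x 1 * x 2 - 2 * |x 2| * x 0 / sigmaBI x + 2 * Real.sign (x 2) * x 1 * sigmaBI x

/-- Second component of the speed-gradient vector `g(x)` for the Brockett integrator:
`g₂(x) = 2x₂ + 4x₁x₃ − 2|x₃|x₂/σ(x) − 2 sgn(x₃) x₁ σ(x)`. -/
noncomputable def g2BI (x : EuclideanSpace ℝ (Fin 3)) : ℝ :=
  2 * x 1 + 4 * x 0 * x 2 - 2 * |x 2| * x 1 / sigmaBI x - 2 * Real.sign (x 2) * x 0 * sigmaBI x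

/-- The set-valued map `G : ℝ³ ⇉ ℝ²`: `G(x) = {g(x)}` if `σ(x) ≠ 0` and `x₃ ≠ 0`;
`G(x) = {(2x₁, 2x₂), (2x₁ + 2x₂σ(x), 2x₂ − 2x₁σ(x)), (2x₁ − 2x₂σ(x), 2x₂ + 2x₁σ(x))}` if
`x₃ = 0`; and `G(x) = {−2|x₃|w : |w| = 1}` if `σ(x) = 0` and `x₃ ≠ 0`. -/
noncomputable def GBI (x : EuclideanSpace ℝ (Fin 3)) : Set (ℝ × ℝ) :=
  if x 2 = 0 then
    {(2 * x 0, 2 * x 1),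
     (2 * x 0 + 2 * x 1 * sigmaBI x, 2 * x 1 - 2 * x 0 * sigmaBI x),
     (2 * x 0 - 2 * x 1 * sigmaBI x, 2 * x 1 + 2 * x 0 * sigmaBI x)}
  else if sigmaBI x = 0 then
    {p : ℝ × ℝ | ∃ w₁ w₂ : ℝ, w₁ ^ 2 + w₂ ^ 2 = 1 ∧
      p = (-2 * |x 2| * w₁, -2 * |x 2| * w₂)}
  else {(g1BI x, g2BI x)}

/-!
Every value `G x` is compact (three points, a circle or a point), so it suffices that `G y` lies in
every `ε`-thickening of `G x` for `y` close to `x`. Put `b_s(y) = (2y₁ + 2s y₂σ, 2y₂ − 2s y₁σ)`;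
on the plane `x₃ = 0`, `G = {b₀, b₁, b₋₁}`. Off that plane `g = b_{sgn x₃} + O(|x₃|(σ + 1))`, and on
the axis `σ = 0` the circle of radius `2|x₃|` lies within `2|x₃|` of `b₀ = 0`; so near the plane
every value of `G` is close to some `b_s`, which is continuous. Near the axis, `g(y)` lies within
`O(σ)` of the point `−2|y₃| (y₁, y₂)/σ` of the circle of radius `2|y₃|`. Elsewhere `G = {g}`, and
`g` is continuous because `sgn x₃` is locally constant.
-/

open Metric Filter Topology

lemma abs_div_le_one_of_abs_le {a b : ℝ} (h : |a| ≤ b) : |a / b| ≤ 1 := by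
  have hb : 0 ≤ b := (abs_nonneg a).trans h
  rw [abs_div, abs_of_nonneg hb]
  exact div_le_one_of_le₀ h hb

lemma abs_le_one_of_sq_add_sq_eq_one {a b : ℝ} (h : a ^ 2 + b ^ 2 = 1) : |a| ≤ 1 := by
  rw [← sq_le_one_iff_abs_le_one]
  nlinarith [sq_nonneg b]

lemma Real.abs_sign_le_one (r : ℝ) : |Real.sign r| ≤ 1 := by
  rcases Real.sign_apply_eq r with h | h | h <;> simp [h]

lemma Real.continuousAt_sign {a : ℝ} (ha : a ≠ 0) : ContinuousAt Real.sign a := by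
  rcases ha.lt_or_gt with h | h
  · exact (continuousAt_const (y := -1)).congr <| (eventually_lt_nhds h).mono fun b hb =>
      (Real.sign_of_neg hb).symm
  · exact (continuousAt_const (y := 1)).congr <| (eventually_gt_nhds h).mono fun b hb =>
      (Real.sign_of_pos hb).symm

lemma abs_mul_le_of_abs_le_one (c : ℝ) {w : ℝ} (hw : |w| ≤ 1) : |c * w| ≤ |c| := by
  rw [abs_mul]
  exact mul_le_of_le_one_right (abs_nonneg c) hw

lemma Prod.dist_le_of_abs_sub_le {p q : ℝ × ℝ} {c : ℝ} (h₁ : |p.1 - q.1| ≤ c)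
    (h₂ : |p.2 - q.2| ≤ c) : dist p q ≤ c := by
  rw [Prod.dist_eq, Real.dist_eq, Real.dist_eq]
  exact max_le h₁ h₂

lemma abs_four_mul_mul_sub_le {a t u c : ℝ} (ha : |a| ≤ c) (hu : |u| ≤ 1) :
    |4 * a * t - 2 * |t| * u| ≤ |t| * (4 * c + 2) :=
  calc |4 * a * t - 2 * |t| * u|
      ≤ |4 * a * t| + |2 * |t| * u| := abs_sub _ _
    _ = 4 * |a| * |t| + 2 * |t| * |u| := by simp [abs_mul]
    _ ≤ 4 * c * |t| + 2 * |t| * 1 := by gcongr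
    _ = |t| * (4 * c + 2) := by ring

lemma abs_two_mul_sub_add_le {a b t s c : ℝ} (ha : |a| ≤ c) (hb : |b| ≤ c) (hs : |s| ≤ 1) :
    |2 * a - 4 * b * t + 2 * s * b * c| ≤ 2 * c * (1 + 2 * |t| + c) := by
  have hc : 0 ≤ c := (abs_nonneg a).trans ha
  calc |2 * a - 4 * b * t + 2 * s * b * c|
      ≤ |2 * a| + |4 * b * t| + |2 * s * b * c| :=
        (abs_add_le _ _).trans (add_le_add_left (abs_sub _ _) _)
    _ = 2 * |a| + 4 * |b| * |t| + 2 * |s| * |b| * c := by simp [abs_mul, abs_of_nonneg hc]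
    _ ≤ 2 * c + 4 * c * |t| + 2 * 1 * c * c := by gcongr
    _ = 2 * c * (1 + 2 * |t| + c) := by ring

section Sigma

variable (y : EuclideanSpace ℝ (Fin 3))

lemma sigmaBI_sq : sigmaBI y ^ 2 = y 0 ^ 2 + y 1 ^ 2 := Real.sq_sqrt (by positivity)

lemma abs_apply_zero_le_sigmaBI : |y 0| ≤ sigmaBI y :=
  Real.abs_le_sqrt (by nlinarith [sq_nonneg (y 1)])

lemma abs_apply_one_le_sigmaBI : |y 1| ≤ sigmaBI y :=
  Real.abs_le_sqrt (by nlinarith [sq_nonneg (y 0)])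

@[fun_prop]
lemma continuous_sigmaBI : Continuous sigmaBI := by
  unfold sigmaBI; fun_prop

end Sigma

def circleBI (r : ℝ) : Set (ℝ × ℝ) :=
  {p | ∃ w₁ w₂ : ℝ, w₁ ^ 2 + w₂ ^ 2 = 1 ∧ p = (-2 * r * w₁, -2 * r * w₂)}

lemma isCompact_circleBI (r : ℝ) : IsCompact (circleBI r) := by
  set S : Set (ℝ × ℝ) := {w | w.1 ^ 2 + w.2 ^ 2 = 1}
  have hS : IsCompact S := by
    refine isCompact_of_isClosed_isBounded (isClosed_eq (by fun_prop) continuous_const) ?_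
    refine (isBounded_closedBall (x := (0 : ℝ × ℝ)) (r := 1)).subset fun w hw => ?_
    rw [mem_closedBall]
    exact Prod.dist_le_of_abs_sub_le (q := 0) (by simpa using abs_le_one_of_sq_add_sq_eq_one hw)
      (by simpa using abs_le_one_of_sq_add_sq_eq_one ((add_comm _ _).trans hw))
  have : circleBI r = (fun w => (-2 * r) • w) '' S := by
    ext p
    simp only [circleBI, S, Set.mem_ofPred_eq, Set.mem_image, Prod.exists, Prod.smul_mk,
      smul_eq_mul]
    grind
  rw [this]
  exact hS.image (continuous_const_smul _)

lemma norm_le_of_mem_circleBI {r : ℝ} {p : ℝ × ℝ} (hp : p ∈ circleBI r) : ‖p‖ ≤ 2 * |r| := by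
  obtain ⟨w₁, w₂, hw, rfl⟩ := hp
  have h₁ := abs_mul_le_of_abs_le_one (-2 * r) (abs_le_one_of_sq_add_sq_eq_one hw)
  have h₂ := abs_mul_le_of_abs_le_one (-2 * r)
    (abs_le_one_of_sq_add_sq_eq_one ((add_comm _ _).trans hw))
  rw [← dist_zero_right]
  apply Prod.dist_le_of_abs_sub_le
  · simpa [abs_mul] using h₁
  · simpa [abs_mul] using h₂

lemma exists_dist_le_of_mem_circleBI {r : ℝ} {p : ℝ × ℝ} (hp : p ∈ circleBI r) (r' : ℝ) :
    ∃ q ∈ circleBI r', dist p q ≤ 2 * |r - r'| := by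
  obtain ⟨w₁, w₂, hw, rfl⟩ := hp
  have h₁ := abs_mul_le_of_abs_le_one (-2 * (r - r')) (abs_le_one_of_sq_add_sq_eq_one hw)
  have h₂ := abs_mul_le_of_abs_le_one (-2 * (r - r'))
    (abs_le_one_of_sq_add_sq_eq_one ((add_comm _ _).trans hw))
  refine ⟨_, ⟨w₁, w₂, hw, rfl⟩, Prod.dist_le_of_abs_sub_le ?_ ?_⟩
  · exact (congrArg abs (by ring)).trans_le (h₁.trans_eq (by simp [abs_mul]))
  · exact (congrArg abs (by ring)).trans_le (h₂.trans_eq (by simp [abs_mul]))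

noncomputable def branchBI (s : ℝ) (y : EuclideanSpace ℝ (Fin 3)) : ℝ × ℝ :=
  (2 * y 0 + 2 * s * y 1 * sigmaBI y, 2 * y 1 - 2 * s * y 0 * sigmaBI y)

@[fun_prop]
lemma continuous_branchBI (s : ℝ) : Continuous (branchBI s) := by
  unfold branchBI; fun_prop

section Formulas

variable {x : EuclideanSpace ℝ (Fin 3)}

lemma GBI_of_eq_zero (hx : x 2 = 0) : GBI x = (branchBI · x) '' {0, 1, -1} := by
  simp only [GBI, if_pos hx, Set.image_insert_eq, Set.image_singleton, branchBI]
  ring_nf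

lemma GBI_of_sigmaBI_eq_zero (hx : x 2 ≠ 0) (hσ : sigmaBI x = 0) :
    GBI x = circleBI |x 2| := by
  simp only [GBI, if_neg hx, if_pos hσ, circleBI]

lemma GBI_of_ne_zero (hx : x 2 ≠ 0) (hσ : sigmaBI x ≠ 0) :
    GBI x = {(g1BI x, g2BI x)} := by
  simp only [GBI, if_neg hx, if_neg hσ]

end Formulas

lemma isCompact_GBI (x : EuclideanSpace ℝ (Fin 3)) : IsCompact (GBI x) := by
  by_cases hx : x 2 = 0
  · rw [GBI_of_eq_zero hx]
    exact (Set.toFinite _).isCompact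
  by_cases hσ : sigmaBI x = 0
  · rw [GBI_of_sigmaBI_eq_zero hx hσ]
    exact isCompact_circleBI _
  · rw [GBI_of_ne_zero hx hσ]
    exact isCompact_singleton

section Pointwise

variable (y : EuclideanSpace ℝ (Fin 3))

lemma dist_g_branchBI_sign_le :
    dist (g1BI y, g2BI y) (branchBI (Real.sign (y 2)) y) ≤ |y 2| * (4 * sigmaBI y + 2) := by
  apply Prod.dist_le_of_abs_sub_le
  · convert abs_four_mul_mul_sub_le (t := y 2) (abs_neg (y 1) ▸ abs_apply_one_le_sigmaBI y)
      (abs_div_le_one_of_abs_le (abs_apply_zero_le_sigmaBI y)) using 2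
    simp only [g1BI, branchBI]
    ring
  · convert abs_four_mul_mul_sub_le (t := y 2) (abs_apply_zero_le_sigmaBI y)
      (abs_div_le_one_of_abs_le (abs_apply_one_le_sigmaBI y)) using 2
    simp only [g2BI, branchBI]
    ring

lemma dist_g_circleBI_le :
    dist (g1BI y, g2BI y) (-2 * |y 2| * (y 0 / sigmaBI y), -2 * |y 2| * (y 1 / sigmaBI y)) ≤
      2 * sigmaBI y * (1 + 2 * |y 2| + sigmaBI y) := by
  apply Prod.dist_le_of_abs_sub_le
  · convert abs_two_mul_sub_add_le (t := y 2) (abs_apply_zero_le_sigmaBI y)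
      (abs_apply_one_le_sigmaBI y) (Real.abs_sign_le_one (y 2)) using 2
    simp only [g1BI]
    ring
  · convert abs_two_mul_sub_add_le (t := y 2) (abs_apply_one_le_sigmaBI y)
      (abs_neg (y 0) ▸ abs_apply_zero_le_sigmaBI y) (Real.abs_sign_le_one (y 2)) using 2
    simp only [g2BI]
    ring

lemma exists_branchBI_dist_le :
    ∀ p ∈ GBI y, ∃ s ∈ ({0, 1, -1} : Set ℝ),
      dist p (branchBI s y) ≤ |y 2| * (4 * sigmaBI y + 2) := by
  intro p hp
  by_cases hy : y 2 = 0
  · rw [GBI_of_eq_zero hy] at hp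
    obtain ⟨s, hs, rfl⟩ := hp
    exact ⟨s, hs, by simp [hy]⟩
  by_cases hσ : sigmaBI y = 0
  · rw [GBI_of_sigmaBI_eq_zero hy hσ] at hp
    have h₀ : y 0 = 0 := abs_nonpos_iff.mp (hσ ▸ abs_apply_zero_le_sigmaBI y)
    have h₁ : y 1 = 0 := abs_nonpos_iff.mp (hσ ▸ abs_apply_one_le_sigmaBI y)
    have hb : branchBI 0 y = 0 := by simp [branchBI, h₀, h₁]
    refine ⟨0, by simp, ?_⟩
    rw [hb, dist_zero_right, hσ]
    simpa [mul_comm] using norm_le_of_mem_circleBI hp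
  · rw [GBI_of_ne_zero hy hσ, Set.mem_singleton_iff] at hp
    subst hp
    refine ⟨Real.sign (y 2), ?_, dist_g_branchBI_sign_le y⟩
    rcases Real.sign_apply_eq_of_ne_zero _ hy with h | h <;> simp [h]

lemma exists_mem_circleBI_dist_le (hy : y 2 ≠ 0) :
    ∀ p ∈ GBI y, ∃ q ∈ circleBI |y 2|,
      dist p q ≤ 2 * sigmaBI y * (1 + 2 * |y 2| + sigmaBI y) := by
  intro p hp
  by_cases hσ : sigmaBI y = 0
  · rw [GBI_of_sigmaBI_eq_zero hy hσ] at hp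
    exact ⟨p, hp, by simp [hσ]⟩
  · rw [GBI_of_ne_zero hy hσ, Set.mem_singleton_iff] at hp
    subst hp
    refine ⟨_, ⟨y 0 / sigmaBI y, y 1 / sigmaBI y, ?_, rfl⟩, dist_g_circleBI_le y⟩
    rw [div_pow, div_pow, ← add_div, ← sigmaBI_sq, div_self (pow_ne_zero 2 hσ)]

end Pointwise

section Eventually

variable {x : EuclideanSpace ℝ (Fin 3)} {ε : ℝ}

lemma eventually_GBI_subset_thickening_of_eq_zero (hx : x 2 = 0) (hε : 0 < ε) :
    ∀ᶠ y in 𝓝 x, GBI y ⊆ thickening ε (GBI x) := by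
  have hbranch : ∀ᶠ y in 𝓝 x, ∀ s ∈ ({0, 1, -1} : Set ℝ),
      dist (branchBI s y) (branchBI s x) < ε / 2 :=
    (eventually_all_finite (Set.toFinite _)).2 fun s _ =>
      Metric.tendsto_nhds.1 ((continuous_branchBI s).tendsto x) _ (half_pos hε)
  have hsmall : ∀ᶠ y in 𝓝 x, |y 2| * (4 * sigmaBI y + 2) < ε / 2 :=
    ContinuousAt.eventually_lt (by fun_prop) continuousAt_const (by simpa [hx] using half_pos hε)
  filter_upwards [hbranch, hsmall] with y hb hρ p hp
  obtain ⟨s, hs, hps⟩ := exists_branchBI_dist_le y p hp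
  rw [GBI_of_eq_zero hx]
  exact mem_thickening_iff.2 ⟨branchBI s x, Set.mem_image_of_mem _ hs,
    by linarith [dist_triangle p (branchBI s y) (branchBI s x), hb s hs]⟩

lemma eventually_GBI_subset_thickening_of_sigmaBI_eq_zero (hx : x 2 ≠ 0) (hσ : sigmaBI x = 0)
    (hε : 0 < ε) : ∀ᶠ y in 𝓝 x, GBI y ⊆ thickening ε (GBI x) := by
  have hne : ∀ᶠ y in 𝓝 x, y 2 ≠ 0 := ContinuousAt.eventually_ne (by fun_prop) hx
  have hsmall : ∀ᶠ y in 𝓝 x, 2 * sigmaBI y * (1 + 2 * |y 2| + sigmaBI y) < ε / 2 :=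
    ContinuousAt.eventually_lt (by fun_prop) continuousAt_const (by simpa [hσ] using half_pos hε)
  have hradius : ∀ᶠ y in 𝓝 x, 2 * |(|y 2| - |x 2|)| < ε / 2 :=
    ContinuousAt.eventually_lt (by fun_prop) continuousAt_const (by simpa using half_pos hε)
  filter_upwards [hne, hsmall, hradius] with y hy hρ hr p hp
  obtain ⟨q, hq, hpq⟩ := exists_mem_circleBI_dist_le y hy p hp
  obtain ⟨q', hq', hqq'⟩ := exists_dist_le_of_mem_circleBI hq |x 2|
  rw [GBI_of_sigmaBI_eq_zero hx hσ]
  exact mem_thickening_iff.2 ⟨q', hq', by linarith [dist_triangle p q q']⟩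

lemma eventually_GBI_subset_thickening_of_ne_zero (hx : x 2 ≠ 0) (hσ : sigmaBI x ≠ 0)
    (hε : 0 < ε) : ∀ᶠ y in 𝓝 x, GBI y ⊆ thickening ε (GBI x) := by
  have hsign : ContinuousAt (fun y : EuclideanSpace ℝ (Fin 3) => Real.sign (y 2)) x :=
    (Real.continuousAt_sign hx).comp (f := fun y : EuclideanSpace ℝ (Fin 3) => y 2)
      (by fun_prop)
  have hg : ContinuousAt (fun y => (g1BI y, g2BI y)) x := by
    unfold g1BI g2BI
    fun_prop (disch := assumption)
  have hne : ∀ᶠ y in 𝓝 x, y 2 ≠ 0 := ContinuousAt.eventually_ne (by fun_prop) hx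
  have hσne : ∀ᶠ y in 𝓝 x, sigmaBI y ≠ 0 := continuous_sigmaBI.continuousAt.eventually_ne hσ
  rw [GBI_of_ne_zero hx hσ, thickening_singleton]
  filter_upwards [hne, hσne, hg.preimage_mem_nhds (ball_mem_nhds _ hε)] with y hy hyσ hgy
  rw [GBI_of_ne_zero hy hyσ, Set.singleton_subset_iff]
  exact hgy

end Eventually

lemma eventually_GBI_subset_thickening (x : EuclideanSpace ℝ (Fin 3)) {ε : ℝ} (hε : 0 < ε) :
    ∀ᶠ y in 𝓝 x, GBI y ⊆ thickening ε (GBI x) := by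
  by_cases hx : x 2 = 0
  · exact eventually_GBI_subset_thickening_of_eq_zero hx hε
  by_cases hσ : sigmaBI x = 0
  · exact eventually_GBI_subset_thickening_of_sigmaBI_eq_zero hx hσ hε
  · exact eventually_GBI_subset_thickening_of_ne_zero hx hσ hε

/-- The set-valued map `G` is upper semicontinuous: for every `x` and every open
`V ⊆ ℝ²` with `G(x) ⊆ V` there is `δ > 0` such that `G(y) ⊆ V` whenever `|y − x| < δ`. -/
theorem GBI_upper_semicontinuous :
    ∀ x : EuclideanSpace ℝ (Fin 3), ∀ V : Set (ℝ × ℝ), IsOpen V → GBI x ⊆ V →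
      ∃ δ : ℝ, 0 < δ ∧ ∀ y : EuclideanSpace ℝ (Fin 3), ‖y - x‖ < δ → GBI y ⊆ V := by
  intro x V hV hxV
  obtain ⟨ε, hε, hεV⟩ := (isCompact_GBI x).exists_thickening_subset_open hV hxV
  obtain ⟨δ, hδ, hδε⟩ := Metric.eventually_nhds_iff.1 (eventually_GBI_subset_thickening x hε)
  exact ⟨δ, hδ, fun y hy => (hδε (by rwa [dist_eq_norm])).trans hεV⟩
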